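/- Let N be an odd positive integer, let l be a natural number, and let q be an integer with 1 ≤ q ≤ N − 1 and gcd(q, N) = 1. Define the Zadoff–Chu sequence x_q(n) = exp(−2πi · q · (n(n+1)/2 + l·n) / N) for integers n. Then for every integer m, the periodic autocorrelation R(m) = Σ_{n=0}^{N−1} x_q(n) · conj(x_q(n + m)) satisfies R(m) = N if N divides m, and R(m) = 0 otherwise. -/

import Mathlib

open Complex

/-- The Zadoff–Chu sequence of length `N`, root index `q` and shift `l`:
`x_q(n) = exp(−2πi · q · (n(n+1)/2 + l·n) / N)`. -/
noncomputable def zadoffChu (N : ℕ) (l : ℕ) (q : ℤ) (n : ℤ) : ℂ :=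
  Complex.exp (-(2 * Real.pi * Complex.I * (q : ℂ) *
      ((n : ℂ) * ((n : ℂ) + 1) / 2 + (l : ℂ) * (n : ℂ)) / (N : ℂ)))

/-- **Zero-autocorrelation (CAZAC) property of Zadoff–Chu sequences.** For odd `N`, root
index `q` with `1 ≤ q ≤ N − 1` and `gcd(q, N) = 1`, the periodic autocorrelation
`R(m) = Σ_{n=0}^{N−1} x_q(n) · conj(x_q(n+m))` equals `N` when `N ∣ m` and `0` otherwise. -/
theorem zadoffChu_autocorrelation
    (N : ℕ) (hodd : Odd N) (hpos : 0 < N) (l : ℕ) (q : ℤ)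
    (hq1 : 1 ≤ q) (hq2 : q ≤ (N : ℤ) - 1) (hgcd : Int.gcd q (N : ℤ) = 1) (m : ℤ) :
    ∑ n ∈ Finset.range N,
        zadoffChu N l q (n : ℤ) * (starRingEnd ℂ) (zadoffChu N l q ((n : ℤ) + m)) =
      if (N : ℤ) ∣ m then (N : ℂ) else 0 := by
  have hN : (N : ℂ) ≠ 0 := Nat.cast_ne_zero.mpr hpos.ne'
  set A : ℂ := Complex.exp (2 * Real.pi * Complex.I * (q : ℂ) *
      ((m : ℂ) * ((m : ℂ) + 1) / 2 + (l : ℂ) * (m : ℂ)) / (N : ℂ)) with hA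
  set ζ : ℂ := Complex.exp (2 * Real.pi * Complex.I * (q : ℂ) * (m : ℂ) / (N : ℂ)) with hζ
  have key : ∀ n ∈ Finset.range N,
      zadoffChu N l q (n : ℤ) * (starRingEnd ℂ) (zadoffChu N l q ((n : ℤ) + m))
        = A * ζ ^ n := by
    intro n _
    unfold zadoffChu
    rw [← Complex.exp_conj, ← Complex.exp_nat_mul, ← Complex.exp_add, ← Complex.exp_add]
    congr 1
    simp only [map_neg, map_div₀, map_mul, map_add, map_one, Complex.conj_I,
      Complex.conj_ofReal, map_natCast, map_intCast, map_ofNat]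
    push_cast
    field_simp
    ring
  rw [Finset.sum_congr rfl key, ← Finset.mul_sum]
  by_cases hdvd : (N : ℤ) ∣ m
  · rw [if_pos hdvd]
    obtain ⟨k, hk⟩ := hdvd
    have h2 : (2 : ℤ) ∣ k * ((N : ℤ) * k + 1) := by
      rcases Int.even_or_odd k with he | ho
      · exact Dvd.dvd.mul_right he.two_dvd _
      · refine Dvd.dvd.mul_left ?_ _
        have : Odd ((N : ℤ) * k) := (Int.odd_coe_nat N |>.mpr hodd).mul ho
        obtain ⟨t, ht⟩ := this
        exact ⟨t + 1, by omega⟩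
    obtain ⟨j, hj⟩ := h2
    have hζ1 : ζ = 1 := by
      rw [hζ, hk]
      have : 2 * (Real.pi : ℂ) * Complex.I * (q : ℂ) * (((N : ℤ) * k : ℤ) : ℂ) / (N : ℂ)
          = ((q * k : ℤ) : ℂ) * (2 * Real.pi * Complex.I) := by
        push_cast; field_simp
      rw [this, Complex.exp_int_mul_two_pi_mul_I]
    have hA1 : A = 1 := by
      rw [hA, hk]
      have : 2 * (Real.pi : ℂ) * Complex.I * (q : ℂ) *
          ((((N : ℤ) * k : ℤ) : ℂ) * ((((N : ℤ) * k : ℤ) : ℂ) + 1) / 2 + (l : ℂ) * (((N : ℤ) * k : ℤ) : ℂ)) / (N : ℂ)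
          = ((q * (j + l * k) : ℤ) : ℂ) * (2 * Real.pi * Complex.I) := by
        have hj' : (k : ℂ) * ((N : ℂ) * k + 1) = 2 * j := by exact_mod_cast hj
        push_cast
        rw [div_eq_iff hN]
        linear_combination ((Real.pi : ℂ) * Complex.I * q * (N:ℂ)) * hj'
      rw [this, Complex.exp_int_mul_two_pi_mul_I]
    simp [hζ1, hA1]
  · rw [if_neg hdvd]
    have hζne : ζ ≠ 1 := by
      intro h
      rw [hζ, Complex.exp_eq_one_iff] at h
      obtain ⟨k, hk⟩ := h
      have h2pi : (2 * Real.pi * Complex.I : ℂ) ≠ 0 := by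
        simp [Real.pi_ne_zero, Complex.I_ne_zero, Complex.ofReal_ne_zero]
      have : (q : ℂ) * (m : ℂ) = (k : ℂ) * (N : ℂ) := by
        field_simp at hk
        have hk' : 2 * (Real.pi : ℂ) * Complex.I * ((q : ℂ) * m) =
            2 * (Real.pi : ℂ) * Complex.I * ((k : ℂ) * N) := by
          linear_combination (2 * (Real.pi : ℂ) * Complex.I) * hk
        exact mul_left_cancel₀ h2pi hk'
      have hint : q * m = k * (N : ℤ) := by exact_mod_cast this
      have hNqm : (N : ℤ) ∣ q * m := ⟨k, by linarith⟩
      exact hdvd (Int.dvd_of_dvd_mul_right_of_gcd_one hNqm (Int.gcd_comm q N ▸ hgcd))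
    have hζN : ζ ^ N = 1 := by
      rw [hζ, ← Complex.exp_nat_mul]
      have : (N : ℂ) * (2 * Real.pi * Complex.I * (q : ℂ) * (m : ℂ) / (N : ℂ))
          = ((q * m : ℤ) : ℂ) * (2 * Real.pi * Complex.I) := by
        push_cast; field_simp
      rw [this, Complex.exp_int_mul_two_pi_mul_I]
    rw [geom_sum_eq hζne, hζN]
    simp
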